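/- Let λ : ℕ → ℝ with λ(n) > 0 for all n, let k : ℕ → ℝ with k(j) > 0, and set ν(I) = (I!/|I|!)·λ(|I|)⁻¹·∏_r k(r)^(2·I(r)). Fix j : ℕ and let e_j denote the multi-index with a single 1 in position j. Define, for coefficient functions b : (ℕ →₀ ℕ) → ℂ: the creation operator (A†_j b)(I) = b(I - e_j)/k(j) when I(j) ≥ 1 and 0 otherwise, and the annihilation operator (A_j b)(I) = k(j)·(I(j)+1)·(λ(|I|)/((|I|+1)·λ(|I|+1)))·b(I + e_j). Then for all finitely supported a, b : (ℕ →₀ ℕ) → ℂ, ∑_I conj((A†_j a)(I))·b(I)·ν(I) = ∑_I conj(a(I))·(A_j b)(I)·ν(I). -/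

import Mathlib

open scoped BigOperators

/-- The degree `|I| = ∑_r I r` of a multi-index. -/
noncomputable def mdeg (I : ℕ →₀ ℕ) : ℕ := I.sum fun _ n => n

/-- The factorial `I! = ∏_r (I r)!` of a multi-index. -/
noncomputable def mfact (I : ℕ →₀ ℕ) : ℕ := I.prod fun _ n => n.factorial

/-- The weight `ν(I) = (I!/|I|!)·λ(|I|)⁻¹·∏_r k(r)^(2·I(r))`. -/
noncomputable def nuwt (lam : ℕ → ℝ) (k : ℕ → ℝ) (I : ℕ →₀ ℕ) : ℝ :=
  ((mfact I : ℝ) / (Nat.factorial (mdeg I) : ℝ)) * (lam (mdeg I))⁻¹ *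
    ∏ r ∈ I.support, k r ^ (2 * I r)

/-- The creation operator `(A†_j b)(I) = b(I - e_j)/k(j)` if `I j ≥ 1`, else `0`. -/
noncomputable def creOp (k : ℕ → ℝ) (j : ℕ) (b : (ℕ →₀ ℕ) → ℂ) (I : ℕ →₀ ℕ) : ℂ :=
  if 1 ≤ I j then b (I - Finsupp.single j 1) / (k j : ℂ) else 0

/-- The annihilation operator
`(A_j b)(I) = k(j)·(I(j)+1)·(λ(|I|)/((|I|+1)·λ(|I|+1)))·b(I + e_j)`. -/
noncomputable def annOp (lam : ℕ → ℝ) (k : ℕ → ℝ) (j : ℕ) (b : (ℕ →₀ ℕ) → ℂ)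
    (I : ℕ →₀ ℕ) : ℂ :=
  (k j : ℂ) * ((I j : ℂ) + 1) *
    ((lam (mdeg I) : ℂ) / (((mdeg I : ℂ) + 1) * (lam (mdeg I + 1) : ℂ))) *
    b (I + Finsupp.single j 1)

/-! Substituting `I = J + e_j` turns the left-hand sum into a sum over all `J`, and the weights
satisfy `ν(J + e_j) = k_j² (J_j + 1) λ(n) / ((n + 1) λ(n + 1)) · ν(J)` with `n = |J|`; against
the `1 / k_j` of `A†_j` this is exactly the factor carried by `A_j`. -/

open Function Set Finsupp

theorem finsum_eq_finsum_comp_of_support_subset_range {α β M : Type*} [AddCommMonoid M]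
    {f : α → M} {g : β → α} (hg : Injective g) (hf : support f ⊆ range g) :
    ∑ᶠ i, f i = ∑ᶠ j, f (g j) := by
  rw [← finsum_mem_univ, ← finsum_mem_range hg]
  exact finsum_mem_inter_support_eq' _ _ _ fun x hx => by simp [hf hx]

theorem Finsupp.prod_add_single_one {α M : Type*} [CommMonoid M]
    (J : α →₀ ℕ) (j : α) {f : α → ℕ → M} (hf : ∀ r, f r 0 = 1) :
    (J + single j 1).prod f = f j (J j + 1) * (J.erase j).prod f := by
  rw [← mul_prod_erase' _ j f hf, erase_add, erase_single, add_zero]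
  simp

theorem mdeg_add_single (J : ℕ →₀ ℕ) (j : ℕ) :
    mdeg (J + single j 1) = mdeg J + 1 := by
  change degree _ = degree _ + 1
  simp

theorem mfact_add_single (J : ℕ →₀ ℕ) (j : ℕ) :
    mfact (J + single j 1) = (J j + 1) * mfact J := by
  unfold mfact
  rw [prod_add_single_one J j fun _ => rfl, ← mul_prod_erase' J j _ fun _ => rfl,
    Nat.factorial_succ, mul_assoc]

theorem prod_pow_two_mul_add_single (k : ℕ → ℝ) (J : ℕ →₀ ℕ) (j : ℕ) :
    ∏ r ∈ (J + single j 1).support, k r ^ (2 * (J + single j 1 : ℕ →₀ ℕ) r) =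
      k j ^ 2 * ∏ r ∈ J.support, k r ^ (2 * J r) := by
  change (J + single j 1).prod (fun r n => k r ^ (2 * n)) = _
  rw [prod_add_index' (fun _ => by simp) (fun _ _ _ => by rw [mul_add, pow_add]),
    prod_single_index (by simp), mul_comm]
  rfl

theorem nuwt_add_single (lam k : ℕ → ℝ) (j : ℕ) (J : ℕ →₀ ℕ) (hlam : lam (mdeg J) ≠ 0) :
    nuwt lam k (J + single j 1) =
      k j ^ 2 * ((J j : ℝ) + 1) *
        (lam (mdeg J) / (((mdeg J : ℝ) + 1) * lam (mdeg J + 1))) * nuwt lam k J := by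
  unfold nuwt
  rw [mdeg_add_single, mfact_add_single, prod_pow_two_mul_add_single, Nat.factorial_succ]
  push_cast
  field_simp

theorem creOp_add_single (k : ℕ → ℝ) (j : ℕ) (a : (ℕ →₀ ℕ) → ℂ) (J : ℕ →₀ ℕ) :
    creOp k j a (J + single j 1) = a J / k j := by
  simp [creOp]

theorem support_creOp_subset (k : ℕ → ℝ) (j : ℕ) (a : (ℕ →₀ ℕ) → ℂ) :
    support (creOp k j a) ⊆ range (· + single j 1) := by
  intro I hI
  have hIj : 1 ≤ I j := by
    by_contra h
    exact hI (if_neg h)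
  exact ⟨I - single j 1, tsub_add_cancel_of_le (single_le_iff.2 hIj)⟩

theorem creOp_pairing_add_single (lam : ℕ → ℝ) (k : ℕ → ℝ) (j : ℕ) (a b : (ℕ →₀ ℕ) → ℂ)
    (J : ℕ →₀ ℕ) (hlam : lam (mdeg J) ≠ 0) :
    starRingEnd ℂ (creOp k j a (J + single j 1)) * b (J + single j 1) *
        (nuwt lam k (J + single j 1) : ℂ) =
      starRingEnd ℂ (a J) * annOp lam k j b J * (nuwt lam k J : ℂ) := by
  rw [creOp_add_single, nuwt_add_single lam k j J hlam, annOp, map_div₀, Complex.conj_ofReal]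
  push_cast
  by_cases hk : (k j : ℂ) = 0
  · simp [hk]
  · field_simp

theorem stmt10_general (lam : ℕ → ℝ) (hlam_pos : ∀ n, 0 < lam n)
    (k : ℕ → ℝ) (j : ℕ)
    (a b : (ℕ →₀ ℕ) → ℂ) :
    ∑ᶠ I : ℕ →₀ ℕ, (starRingEnd ℂ) (creOp k j a I) * b I * (nuwt lam k I : ℂ) =
    ∑ᶠ I : ℕ →₀ ℕ, (starRingEnd ℂ) (a I) * annOp lam k j b I * (nuwt lam k I : ℂ) := by
  have hsupp : support (fun I => starRingEnd ℂ (creOp k j a I) * b I * (nuwt lam k I : ℂ)) ⊆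
      range (· + single j 1) := fun I hI =>
    support_creOp_subset k j a fun h => hI (by simp [h])
  rw [finsum_eq_finsum_comp_of_support_subset_range (add_left_injective _) hsupp]
  exact finsum_congr fun J => creOp_pairing_add_single lam k j a b J (hlam_pos _).ne'

theorem stmt10 (lam : ℕ → ℝ) (hlam_pos : ∀ n, 0 < lam n)
    (k : ℕ → ℝ) (hk : ∀ r, 0 < k r) (j : ℕ)
    (a b : (ℕ →₀ ℕ) → ℂ)
    (ha : (Function.support a).Finite) (hb : (Function.support b).Finite) :
    ∑ᶠ I : ℕ →₀ ℕ, (starRingEnd ℂ) (creOp k j a I) * b I * (nuwt lam k I : ℂ) =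
    ∑ᶠ I : ℕ →₀ ℕ, (starRingEnd ℂ) (a I) * annOp lam k j b I * (nuwt lam k I : ℂ) :=
  stmt10_general lam hlam_pos k j a b
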